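/- arXiv:1312.2304 — 2 statements merged into one kernel-verified Lean document; each statement's English description precedes it below -/
import Mathlib

section
/- Let h : Q → σ be a homeomorphism from the closed unit square Q = [0,1]×[0,1] onto σ ⊆ ℝ². For y ∈ [0,1] let ℓ_y = [0,1]×{y}. If h(ℓ_0) is not a line segment, then there exists δ > 0 such that h(ℓ_y) is not a line segment for any y ∈ [0,δ]. -/
/-!
A segment is a collinear set, and conversely a nonempty compact connected collinear set is the
image of a compact interval under an affine parametrisation of its line, hence a segment. So
`h(ℓ₀)` contains three non-collinear points `h(tᵢ, 0)`. Non-collinearity of a triple is an open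
condition, so by continuity of `h` the points `h(tᵢ, y)` of `h(ℓ_y)` stay non-collinear for all
small `y ≥ 0`.
-/

open Set Filter Topology

section Collinear

variable {k V P : Type*} [DivisionRing k] [AddCommGroup V] [Module k V] [AddTorsor V P]

theorem collinear_affineSpan_iff {s : Set P} :
    Collinear k (affineSpan k s : Set P) ↔ Collinear k s := by
  rw [Collinear, Collinear, ← AffineSubspace.direction, direction_affineSpan]

theorem exists_not_collinear_triple_of_not_collinear_image {ι : Type*} {f : ι → P} {s : Set ι}
    (h : ¬ Collinear k (f '' s)) :
    ∃ i₁ ∈ s, ∃ i₂ ∈ s, ∃ i₃ ∈ s, ¬ Collinear k ({f i₁, f i₂, f i₃} : Set P) := by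
  contrapose! h
  rcases (f '' s).eq_empty_or_nonempty with hempty | ⟨_, ⟨i₁, hi₁, rfl⟩⟩
  · exact hempty ▸ collinear_empty k P
  by_cases hsingle : f '' s ⊆ {f i₁}
  · exact (collinear_singleton k (f i₁)).subset hsingle
  obtain ⟨_, ⟨i₂, hi₂, rfl⟩, hne⟩ := not_subset.mp hsingle
  have hline : f '' s ⊆ line[k, f i₁, f i₂] := by
    rintro _ ⟨i₃, hi₃, rfl⟩
    exact (h i₁ hi₁ i₂ hi₂ i₃ hi₃).mem_affineSpan_of_mem_of_ne (by simp) (by simp) (by simp)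
      (Ne.symm hne)
  exact (collinear_affineSpan_iff.mpr (collinear_pair k (f i₁) (f i₂))).subset hline

end Collinear

theorem collinear_segment {k E : Type*} [Field k] [LinearOrder k] [IsStrictOrderedRing k]
    [AddCommGroup E] [Module k E] (a b : E) : Collinear k (segment k a b) := by
  refine (collinear_iff_exists_forall_eq_smul_vadd _).mpr ⟨a, b - a, ?_⟩
  rw [segment_eq_image_lineMap]
  rintro _ ⟨t, -, rfl⟩
  exact ⟨t, by rw [AffineMap.lineMap_apply, vsub_eq_sub]⟩

theorem IsCompact.exists_eq_segment_of_collinear {E : Type*} [AddCommGroup E] [Module ℝ E]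
    [TopologicalSpace E] [IsTopologicalAddGroup E] [ContinuousSMul ℝ E] [T2Space E]
    {s : Set E} (hs : IsCompact s) (hconn : IsPreconnected s) (hne : s.Nonempty)
    (hcol : Collinear ℝ s) : ∃ a b : E, s = segment ℝ a b := by
  obtain ⟨p₀, v, hparam⟩ := (collinear_iff_exists_forall_eq_smul_vadd s).mp hcol
  rcases eq_or_ne v 0 with rfl | hv
  · refine ⟨p₀, p₀, ?_⟩
    rw [segment_same]
    exact (hne.subset_singleton_iff).mp fun p hp => by simpa using hparam p hp
  set φ : ℝ →ᵃ[ℝ] E := AffineMap.lineMap p₀ (v +ᵥ p₀)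
  have hφ_apply : ∀ r, φ r = r • v +ᵥ p₀ := fun r => by
    rw [AffineMap.lineMap_apply, vadd_vsub]
  have hφ : IsClosedEmbedding φ := by
    have : (φ : ℝ → E) = (Homeomorph.addRight p₀) ∘ fun r : ℝ => r • v := by
      funext r
      simp [hφ_apply]
    rw [this]
    exact (Homeomorph.addRight p₀).isClosedEmbedding.comp (isClosedEmbedding_smul_left hv)
  set T : Set ℝ := φ ⁻¹' s
  have hφT : φ '' T = s := image_preimage_eq_of_subset fun p hp => by
    obtain ⟨r, rfl⟩ := hparam p hp
    exact ⟨r, hφ_apply r⟩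
  have hTconn : IsConnected T := by
    refine ⟨?_, hφ.isInducing.isPreconnected_image.mp (hφT ▸ hconn)⟩
    exact (hφT ▸ hne : (φ '' T).Nonempty).of_image
  have hTIcc : T = Icc (sInf T) (sSup T) :=
    eq_Icc_of_connected_compact hTconn (hφ.isCompact_preimage hs)
  have hle : sInf T ≤ sSup T := nonempty_Icc.mp (hTIcc ▸ hTconn.nonempty)
  refine ⟨φ (sInf T), φ (sSup T), ?_⟩
  rw [← hφT]
  nth_rw 1 [hTIcc]
  rw [← segment_eq_Icc hle, image_segment]

theorem Filter.Tendsto.eventually_not_collinear {𝕜 E α : Type*} [NontriviallyNormedField 𝕜]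
    [CompleteSpace 𝕜] [NormedAddCommGroup E] [NormedSpace 𝕜 E] {l : Filter α}
    {f₁ f₂ f₃ : α → E} {p₁ p₂ p₃ : E} (h₁ : Tendsto f₁ l (𝓝 p₁)) (h₂ : Tendsto f₂ l (𝓝 p₂))
    (h₃ : Tendsto f₃ l (𝓝 p₃)) (h : ¬ Collinear 𝕜 ({p₁, p₂, p₃} : Set E)) :
    ∀ᶠ x in l, ¬ Collinear 𝕜 ({f₁ x, f₂ x, f₃ x} : Set E) := by
  simp_rw [← affineIndependent_iff_not_collinear_set] at h ⊢
  have hf : Tendsto (fun x => ![f₁ x, f₂ x, f₃ x]) l (𝓝 ![p₁, p₂, p₃]) := by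
    refine tendsto_pi_nhds.mpr fun i => ?_
    fin_cases i <;> assumption
  exact hf.eventually (isOpen_setOfPred_affineIndependent.mem_nhds h)

theorem stmt3_general (h : ℝ × ℝ → ℝ × ℝ)
    (hc : ContinuousOn h (Set.Icc (0:ℝ) 1 ×ˢ Set.Icc (0:ℝ) 1))
    (h0 : ¬ ∃ a b : ℝ × ℝ, h '' (Set.Icc (0:ℝ) 1 ×ˢ ({0} : Set ℝ)) = segment ℝ a b) :
    ∃ δ > (0:ℝ), ∀ y ∈ Set.Icc (0:ℝ) δ,
      ¬ ∃ a b : ℝ × ℝ, h '' (Set.Icc (0:ℝ) 1 ×ˢ ({y} : Set ℝ)) = segment ℝ a b := by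
  have hℓ₀ : Icc (0:ℝ) 1 ×ˢ ({0} : Set ℝ) ⊆ Icc 0 1 ×ˢ Icc 0 1 :=
    prod_mono_right (singleton_subset_iff.mpr ⟨le_rfl, zero_le_one⟩)
  have hcol₀ : ¬ Collinear ℝ (h '' (Icc 0 1 ×ˢ {0})) := fun hcol =>
    h0 (IsCompact.exists_eq_segment_of_collinear
      ((isCompact_Icc.prod isCompact_singleton).image_of_continuousOn (hc.mono hℓ₀))
      (((convex_Icc 0 1).prod (convex_singleton 0)).isPreconnected.image h (hc.mono hℓ₀))
      ((nonempty_Icc.mpr zero_le_one).prod (singleton_nonempty 0) |>.image h) hcol)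
  obtain ⟨⟨t₁, _⟩, ⟨ht₁, rfl⟩, ⟨t₂, _⟩, ⟨ht₂, rfl⟩, ⟨t₃, _⟩, ⟨ht₃, rfl⟩, hnc⟩ :=
    exists_not_collinear_triple_of_not_collinear_image hcol₀
  have hvert : ∀ t ∈ Icc (0:ℝ) 1, Tendsto (fun y => h (t, y)) (𝓝[≥] 0) (𝓝 (h (t, 0))) :=
    fun t ht => by
      rw [← nhdsWithin_Icc_eq_nhdsGE zero_lt_one]
      exact (hc.comp (by fun_prop : Continuous fun y : ℝ => (t, y)).continuousOn
        fun y hy => ⟨ht, hy⟩) 0 ⟨le_rfl, zero_le_one⟩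
  obtain ⟨δ, hδ, hsmall⟩ := mem_nhdsGE_iff_exists_Icc_subset.mp
    ((hvert t₁ ht₁).eventually_not_collinear (hvert t₂ ht₂) (hvert t₃ ht₃) hnc)
  refine ⟨δ, hδ, fun y hy ⟨a, b, hab⟩ => hsmall hy ((collinear_segment a b).subset ?_)⟩
  rw [← hab]
  rintro _ (rfl | rfl | rfl) <;> exact mem_image_of_mem h ⟨‹_›, rfl⟩

/-- Let `h` be a homeomorphism from the closed unit square `Q = [0,1] × [0,1]` onto its image
`σ ⊆ ℝ²`. For `y ∈ [0,1]` let `ℓ_y = [0,1] × {y}`. If `h(ℓ_0)` is not a line segment, then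
there exists `δ > 0` such that `h(ℓ_y)` is not a line segment for any `y ∈ [0,δ]`. -/
theorem stmt3 (h : ℝ × ℝ → ℝ × ℝ)
    (hc : ContinuousOn h (Set.Icc (0:ℝ) 1 ×ˢ Set.Icc (0:ℝ) 1))
    (hinj : Set.InjOn h (Set.Icc (0:ℝ) 1 ×ˢ Set.Icc (0:ℝ) 1))
    (h0 : ¬ ∃ a b : ℝ × ℝ, h '' (Set.Icc (0:ℝ) 1 ×ˢ ({0} : Set ℝ)) = segment ℝ a b) :
    ∃ δ > (0:ℝ), ∀ y ∈ Set.Icc (0:ℝ) δ,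
      ¬ ∃ a b : ℝ × ℝ, h '' (Set.Icc (0:ℝ) 1 ×ˢ ({y} : Set ℝ)) = segment ℝ a b :=
  stmt3_general h hc h0
end

section
/- Let σ₁ ⊆ ℝ² be nonempty compact, α a half-plane-affine map, and σ₂ = α(σ₁). Then the map f ↦ f ∘ α⁻¹ is a bounded algebra isomorphism from BV(σ₁) onto BV(σ₂), with ‖f ∘ α⁻¹‖_{BV(σ₂)} ≤ 2‖f‖_{BV(σ₁)}. -/
/-!
Let `α` agree with the affine maps `α₁`, `α₂` on the half-planes `{f ≤ c}`, `{c ≤ f}`. Along a list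
`S = (xⱼ)` and a line `{g = d}`, the values `g (α xⱼ) - d` equal `g (α₁ xⱼ) - d` or
`g (α₂ xⱼ) - d` according to the side of `xⱼ`; the difference of these two affine functions
vanishes on `{f = c}`, hence is a multiple of `f - c`, so `g ∘ α - d` is their pointwise maximum
or minimum along `S`. A crossing of the maximum of two sequences is a crossing of one of them at
the same segment, or else the preceding segment is a crossing of one of them but not of the
maximum. So the crossings of `α(S)` on one line are at most those of `S` on two lines:
`vf(α(S)) ≤ 2 vf(S)`. The inverse of a half-plane-affine map is again half-plane-affine, giving
`vf(S) ≤ 2 vf(α(S))`, and since `cvar(f ∘ α⁻¹, α(S)) = cvar(f, S)` both bounds transfer to the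
variation.
-/

/-- `[x i, x (i+1)]` is a crossing segment of the list `x₀, …, xₙ` on the line
`{p | g p = c}` (where `g` is a nonzero linear functional). -/
def IsCrossing {n : ℕ} (x : Fin (n + 1) → ℝ × ℝ) (g : ℝ × ℝ →ₗ[ℝ] ℝ) (c : ℝ)
    (i : Fin n) : Prop :=
  (g (x i.castSucc) < c ∧ c < g (x i.succ)) ∨
  (g (x i.succ) < c ∧ c < g (x i.castSucc)) ∨
  ((i : ℕ) = 0 ∧ g (x i.castSucc) = c) ∨
  (0 < (i : ℕ) ∧ g (x i.castSucc) = c ∧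
    g (x ⟨(i : ℕ) - 1, lt_of_le_of_lt (Nat.sub_le _ _) (Nat.lt_succ_of_lt i.isLt)⟩) ≠ c) ∨
  ((i : ℕ) = n - 1 ∧ g (x i.castSucc) ≠ c ∧ g (x i.succ) = c)

/-- `vf(S, ℓ)`: the number of crossing segments of the list on the line `{p | g p = c}`. -/
noncomputable def vfOn {n : ℕ} (x : Fin (n + 1) → ℝ × ℝ) (g : ℝ × ℝ →ₗ[ℝ] ℝ) (c : ℝ) : ℕ :=
  {i : Fin n | IsCrossing x g c i}.ncard

/-- `vf(S)`: the variation factor of the list, the maximum of `vf(S, ℓ)` over all lines. -/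
noncomputable def vf {n : ℕ} (x : Fin (n + 1) → ℝ × ℝ) : ℕ :=
  sSup {k : ℕ | ∃ (g : ℝ × ℝ →ₗ[ℝ] ℝ) (c : ℝ), g ≠ 0 ∧ k = vfOn x g c}

/-- `cvar(f, S)`: the curve variation of `f` along the list. -/
noncomputable def cvar {n : ℕ} (f : ℝ × ℝ → ℂ) (x : Fin (n + 1) → ℝ × ℝ) : ℝ :=
  ∑ i : Fin n, ‖f (x i.succ) - f (x i.castSucc)‖

/-- The set of quotients `cvar(f,S)/vf(S)` over finite lists `S` in `σ`. -/
def varSet (f : ℝ × ℝ → ℂ) (σ : Set (ℝ × ℝ)) : Set ℝ :=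
  {r : ℝ | ∃ (n : ℕ) (x : Fin (n + 1) → ℝ × ℝ), (∀ i, x i ∈ σ) ∧ r = cvar f x / (vf x : ℝ)}

/-- `var(f, σ)`: the two-dimensional variation of `f` on `σ`. -/
noncomputable def var2 (f : ℝ × ℝ → ℂ) (σ : Set (ℝ × ℝ)) : ℝ :=
  sSup (varSet f σ)

/-- `f` is of bounded variation on `σ`: it is bounded on `σ` and the set of quotients
`cvar(f,S)/vf(S)` is bounded above. -/
def MemBV (f : ℝ × ℝ → ℂ) (σ : Set (ℝ × ℝ)) : Prop :=
  BddAbove ((fun z => ‖f z‖) '' σ) ∧ BddAbove (varSet f σ)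

/-- The `BV(σ)` norm `‖f‖_∞ + var(f,σ)`. -/
noncomputable def bvNorm (f : ℝ × ℝ → ℂ) (σ : Set (ℝ × ℝ)) : ℝ :=
  sSup ((fun z => ‖f z‖) '' σ) + var2 f σ

/-- `α : ℝ² → ℝ²` is a half-plane-affine map: it is invertible and there is a half-plane
splitting `{f ≤ c}`, `{c ≤ f}` (with `f` a nonzero linear functional) on whose two closed
half-planes `α` agrees with affine maps `α₁`, `α₂` respectively. -/
def IsHalfPlaneAffine (α : ℝ × ℝ → ℝ × ℝ) : Prop :=
  Function.Bijective α ∧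
    ∃ (f : ℝ × ℝ →ₗ[ℝ] ℝ) (c : ℝ), f ≠ 0 ∧
      ∃ (α₁ α₂ : ℝ × ℝ →ᵃ[ℝ] ℝ × ℝ),
        (∀ p : ℝ × ℝ, f p ≤ c → α p = α₁ p) ∧ (∀ p : ℝ × ℝ, c ≤ f p → α p = α₂ p)

def IsSignCrossing {n : ℕ} (b : Fin (n + 1) → ℝ) (i : Fin n) : Prop :=
  (b i.castSucc < 0 ∧ 0 < b i.succ) ∨
  (b i.succ < 0 ∧ 0 < b i.castSucc) ∨
  ((i : ℕ) = 0 ∧ b i.castSucc = 0) ∨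
  (0 < (i : ℕ) ∧ b i.castSucc = 0 ∧ b ⟨(i : ℕ) - 1, by omega⟩ ≠ 0) ∨
  ((i : ℕ) = n - 1 ∧ b i.castSucc ≠ 0 ∧ b i.succ = 0)

namespace IsSignCrossing

variable {n : ℕ} {p q : Fin (n + 1) → ℝ} {i : Fin n}

lemma of_max_of_last (hi : (i : ℕ) = n - 1) (hc : max (p i.castSucc) (q i.castSucc) ≠ 0)
    (hs : max (p i.succ) (q i.succ) = 0) : IsSignCrossing p i ∨ IsSignCrossing q i := by
  wlog hpq : q i.succ ≤ p i.succ generalizing p q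
  · rw [max_comm] at hc hs
    exact (this hc hs (le_of_not_ge hpq)).symm
  rw [max_eq_left hpq] at hs
  by_cases hp : p i.castSucc = 0
  · have hq : 0 < q i.castSucc := lt_of_not_ge fun h => hc (by rw [hp, max_eq_left h])
    rcases (hpq.trans_eq hs).eq_or_lt with hq0 | hq0
    · exact Or.inr (Or.inr (Or.inr (Or.inr (Or.inr ⟨hi, hq.ne', hq0⟩))))
    · exact Or.inr (Or.inr (Or.inl ⟨hq0, hq⟩))
  · exact Or.inl (Or.inr (Or.inr (Or.inr (Or.inr ⟨hi, hp, hs⟩))))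

lemma of_max_of_prev (hi : 0 < (i : ℕ)) (h : max (p i.castSucc) (q i.castSucc) = 0)
    (hprev : max (p ⟨i - 1, by omega⟩) (q ⟨i - 1, by omega⟩) ≠ 0) :
    IsSignCrossing p i ∨ IsSignCrossing q i ∨
      ∃ j : Fin n, (j : ℕ) + 1 = i ∧ ¬ IsSignCrossing (p ⊔ q) j ∧
        (IsSignCrossing p j ∨ IsSignCrossing q j) := by
  wlog hpq : q i.castSucc ≤ p i.castSucc generalizing p q
  · rw [max_comm] at h hprev
    rcases this h hprev (le_of_not_ge hpq) with h | h | ⟨j, hj, hb, hqp⟩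
    · exact Or.inr (Or.inl h)
    · exact Or.inl h
    · rw [sup_comm] at hb
      exact Or.inr (Or.inr ⟨j, hj, hb, hqp.symm⟩)
  rw [max_eq_left hpq] at h
  by_cases hp : p ⟨i - 1, by omega⟩ = 0
  · have hq : 0 < q ⟨i - 1, by omega⟩ := lt_of_not_ge fun h => hprev (by rw [hp, max_eq_left h])
    rcases (hpq.trans_eq h).eq_or_lt with hq0 | hq0
    · exact Or.inr (Or.inl (Or.inr (Or.inr (Or.inr (Or.inl ⟨hi, hq0, hq.ne'⟩)))))
    -- `q` changes sign on the previous segment, which is not a crossing of `p ⊔ q`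
    set j : Fin n := ⟨i - 1, by omega⟩
    have hjc : j.castSucc = ⟨i - 1, by omega⟩ := rfl
    have hjs : j.succ = i.castSucc := by ext; simp [j]; omega
    refine Or.inr (Or.inr ⟨j, by simp [j]; omega, ?_, Or.inr (Or.inr (Or.inl ?_))⟩)
    · unfold IsSignCrossing
      simp only [Pi.sup_apply, hjc, hjs, hp, h, max_eq_right hq.le]
      rintro (⟨h1, -⟩ | ⟨h1, -⟩ | ⟨-, h1⟩ | ⟨-, h1, -⟩ | ⟨h1, -⟩)
      · linarith
      · exact (le_max_left _ _).not_gt h1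
      · linarith
      · linarith
      · simp [j] at h1; omega
    · rw [hjs, hjc]; exact ⟨hq0, hq⟩
  · exact Or.inl (Or.inr (Or.inr (Or.inr (Or.inl ⟨hi, h, hp⟩))))

lemma of_max (h : IsSignCrossing (p ⊔ q) i) :
    IsSignCrossing p i ∨ IsSignCrossing q i ∨
      ∃ j : Fin n, (j : ℕ) + 1 = i ∧ ¬ IsSignCrossing (p ⊔ q) j ∧
        (IsSignCrossing p j ∨ IsSignCrossing q j) := by
  unfold IsSignCrossing at h
  simp only [Pi.sup_apply, max_lt_iff, lt_max_iff] at h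
  rcases h with ⟨⟨hp, hq⟩, h | h⟩ | ⟨⟨hp, hq⟩, h | h⟩ | ⟨hi, h⟩ | ⟨hi, h, hprev⟩ | ⟨hi, hc, hs⟩
  · exact Or.inl (Or.inl ⟨hp, h⟩)
  · exact Or.inr (Or.inl (Or.inl ⟨hq, h⟩))
  · exact Or.inl (Or.inr (Or.inl ⟨hp, h⟩))
  · exact Or.inr (Or.inl (Or.inr (Or.inl ⟨hq, h⟩)))
  · rcases max_choice (p i.castSucc) (q i.castSucc) with e | e <;> rw [e] at h
    · exact Or.inl (Or.inr (Or.inr (Or.inl ⟨hi, h⟩)))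
    · exact Or.inr (Or.inl (Or.inr (Or.inr (Or.inl ⟨hi, h⟩))))
  · exact of_max_of_prev hi h hprev
  · exact (of_max_of_last hi hc hs).imp_right Or.inl

end IsSignCrossing

def signCrossings {n : ℕ} (b : Fin (n + 1) → ℝ) : Set (Fin n) := {i | IsSignCrossing b i}

lemma ncard_signCrossings_sup_le {n : ℕ} (p q : Fin (n + 1) → ℝ) :
    (signCrossings (p ⊔ q)).ncard ≤ (signCrossings p).ncard + (signCrossings q).ncard := by
  set B := signCrossings (p ⊔ q)
  set C := signCrossings p ∪ signCrossings q
  have hprev : ∀ i ∈ B \ C, ∃ j : Fin n, (j : ℕ) + 1 = i ∧ j ∈ C \ B := by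
    rintro i ⟨hB, hC⟩
    simp only [C, Set.mem_union, not_or] at hC
    rcases IsSignCrossing.of_max hB with h | h | ⟨j, hj, hjB, hjC⟩
    · exact absurd h hC.1
    · exact absurd h hC.2
    · exact ⟨j, hj, hjC, hjB⟩
  have hdiff : (B \ C).ncard ≤ (C \ B).ncard := by
    refine Set.ncard_le_ncard_of_injOn (fun i => ⟨i - 1, by omega⟩) (fun i hi => ?_) ?_
    · obtain ⟨j, hj, hjCB⟩ := hprev i hi
      convert hjCB
      omega
    · intro i hi i' hi' h
      obtain ⟨j, hj, -⟩ := hprev i hi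
      obtain ⟨j', hj', -⟩ := hprev i' hi'
      simp only [Fin.mk.injEq] at h
      exact Fin.ext (by omega)
  calc B.ncard = (B ∩ C).ncard + (B \ C).ncard :=
        (Set.ncard_inter_add_ncard_sdiff_eq_ncard B C).symm
    _ ≤ (C ∩ B).ncard + (C \ B).ncard := by rw [Set.inter_comm]; gcongr
    _ = C.ncard := Set.ncard_inter_add_ncard_sdiff_eq_ncard C B
    _ ≤ (signCrossings p).ncard + (signCrossings q).ncard := Set.ncard_union_le _ _

lemma signCrossings_neg {n : ℕ} (b : Fin (n + 1) → ℝ) : signCrossings (-b) = signCrossings b := by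
  ext i
  simp only [signCrossings, IsSignCrossing, Set.mem_ofPred_eq, Pi.neg_apply, neg_lt_zero, neg_pos,
    neg_eq_zero, ne_eq]
  tauto

lemma ncard_signCrossings_inf_le {n : ℕ} (p q : Fin (n + 1) → ℝ) :
    (signCrossings (p ⊓ q)).ncard ≤ (signCrossings p).ncard + (signCrossings q).ncard := by
  simpa only [← neg_inf, signCrossings_neg] using ncard_signCrossings_sup_le (-p) (-q)

lemma ncard_signCrossings_le_of_sub_eq_mul {n : ℕ} {b p q s : Fin (n + 1) → ℝ} {a : ℝ}
    (hqp : ∀ j, q j - p j = a * s j) (hp : ∀ j, s j ≤ 0 → b j = p j)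
    (hq : ∀ j, 0 ≤ s j → b j = q j) :
    (signCrossings b).ncard ≤ (signCrossings p).ncard + (signCrossings q).ncard := by
  rcases le_total 0 a with ha | ha
  · convert ncard_signCrossings_sup_le p q
    funext j
    rcases le_total (s j) 0 with hs | hs
    · rw [hp j hs, Pi.sup_apply, max_eq_left]; nlinarith [hqp j]
    · rw [hq j hs, Pi.sup_apply, max_eq_right]; nlinarith [hqp j]
  · convert ncard_signCrossings_inf_le p q
    funext j
    rcases le_total (s j) 0 with hs | hs
    · rw [hp j hs, Pi.inf_apply, min_eq_left]; nlinarith [hqp j]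
    · rw [hq j hs, Pi.inf_apply, min_eq_right]; nlinarith [hqp j]

section AffineFunctional

variable {k V W : Type*} [AddCommGroup V] [AddCommGroup W]

lemma AffineMap.apply_eq_linear_add [Ring k] [Module k V] [Module k W] (A : V →ᵃ[k] W) (p : V) :
    A p = A.linear p + A 0 := by
  simpa using A.map_vadd 0 p

lemma AffineMap.linear_comp_affineEquiv_ne_zero [Ring k] [Module k V] [Module k W]
    {u : V →ᵃ[k] W} (hu : u.linear ≠ 0) (e : V ≃ᵃ[k] V) : (u.comp e.toAffineMap).linear ≠ 0 := by
  intro h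
  refine hu (LinearMap.ext fun v => ?_)
  simpa using LinearMap.congr_fun h (e.linear.symm v)

lemma AffineMap.bijective_of_injective [Field k] [Module k V] [FiniteDimensional k V]
    {A : V →ᵃ[k] V} (hA : Function.Injective A) : Function.Bijective A := by
  rw [← A.linear_bijective_iff]
  rw [← A.linear_injective_iff] at hA
  exact ⟨hA, LinearMap.injective_iff_surjective.mp hA⟩

lemma AffineMap.exists_eq_mul_sub_of_eq_zero [Field k] [Module k V] {f : V →ₗ[k] k} (hf : f ≠ 0)
    {c : k} (u : V →ᵃ[k] k) (hu : ∀ p, f p = c → u p = 0) : ∃ a : k, ∀ p, u p = a * (f p - c) := by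
  obtain ⟨p₀, hp₀⟩ := LinearMap.surjective_of_ne_zero hf c
  have hker : LinearMap.ker f ≤ LinearMap.ker u.linear := fun v hv => by
    have h := u.map_vadd p₀ v
    rw [hu _ hp₀, hu _ (by rw [vadd_eq_add, map_add, LinearMap.mem_ker.mp hv, hp₀, zero_add])] at h
    simpa using h.symm
  obtain ⟨a, ha⟩ := Submodule.mem_span_singleton.mp <| by
    simpa using mem_span_of_iInf_ker_le_ker (L := fun _ : Unit => f) (by simpa using hker)
  refine ⟨a, fun p => ?_⟩
  have h := u.map_vadd p₀ (p - p₀)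
  rw [vadd_eq_add, sub_add_cancel, hu _ hp₀, ← ha] at h
  simpa [hp₀] using h

lemma AffineMap.injective_of_eqOn_halfSpace [Field k] [LinearOrder k] [IsStrictOrderedRing k]
    [Module k V] [Module k W] {α : V → W} (hα : Function.Injective α) {f : V →ₗ[k] k}
    (hf : f ≠ 0) (c : k) {A : V →ᵃ[k] W} (hA : ∀ p, f p ≤ c → α p = A p) :
    Function.Injective A := by
  rw [← A.linear_injective_iff, injective_iff_map_eq_zero]
  intro v hv
  obtain ⟨p, hp⟩ := LinearMap.surjective_of_ne_zero hf (min c (c - f v))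
  have h₁ : f p ≤ c := hp ▸ min_le_left _ _
  have h₂ : f (p + v) ≤ c := by rw [map_add, hp]; linarith [min_le_right c (c - f v)]
  have : α (p + v) = α p := by
    rw [hA _ h₂, hA _ h₁, add_comm, ← vadd_eq_add, A.map_vadd, hv, zero_vadd]
  simpa using hα this

end AffineFunctional

namespace IsHalfPlaneAffine

lemma exists_affineEquiv {α : ℝ × ℝ → ℝ × ℝ} (hα : IsHalfPlaneAffine α) :
    ∃ (f : ℝ × ℝ →ₗ[ℝ] ℝ) (c : ℝ), f ≠ 0 ∧ ∃ e₁ e₂ : ℝ × ℝ ≃ᵃ[ℝ] ℝ × ℝ,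
      (∀ p, f p ≤ c → α p = e₁ p) ∧ (∀ p, c ≤ f p → α p = e₂ p) := by
  obtain ⟨⟨hinj, -⟩, f, c, hf, α₁, α₂, h₁, h₂⟩ := hα
  have hα₁ := AffineMap.injective_of_eqOn_halfSpace hinj hf c h₁
  have hα₂ := AffineMap.injective_of_eqOn_halfSpace hinj (neg_ne_zero.mpr hf) (-c)
    fun p hp => h₂ p (by simpa using hp)
  exact ⟨f, c, hf, .ofBijective (AffineMap.bijective_of_injective hα₁),
    .ofBijective (AffineMap.bijective_of_injective hα₂), h₁, h₂⟩

lemma of_affineMap {α : ℝ × ℝ → ℝ × ℝ} (hα : Function.Bijective α) (u : ℝ × ℝ →ᵃ[ℝ] ℝ)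
    (hu : u.linear ≠ 0) (α₁ α₂ : ℝ × ℝ →ᵃ[ℝ] ℝ × ℝ) (h₁ : ∀ p, u p ≤ 0 → α p = α₁ p)
    (h₂ : ∀ p, 0 ≤ u p → α p = α₂ p) : IsHalfPlaneAffine α := by
  refine ⟨hα, u.linear, -u 0, hu, α₁, α₂, fun p hp => h₁ p ?_, fun p hp => h₂ p ?_⟩ <;>
    linarith [u.apply_eq_linear_add p]

lemma symm {α : ℝ × ℝ ≃ ℝ × ℝ} (hα : IsHalfPlaneAffine α) : IsHalfPlaneAffine α.symm := by
  obtain ⟨f, c, hf, e₁, e₂, h₁, h₂⟩ := hα.exists_affineEquiv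
  set u : ℝ × ℝ →ᵃ[ℝ] ℝ := (f.toAffineMap - AffineMap.const ℝ _ c).comp e₁.symm.toAffineMap
  have hu (y) : u y = f (e₁.symm y) - c := by simp [u]
  have hlin : u.linear ≠ 0 := AffineMap.linear_comp_affineEquiv_ne_zero (by simpa using hf) _
  refine of_affineMap α.symm.bijective u hlin e₁.symm e₂.symm (fun y hy => ?_) (fun y hy => ?_)
  · rw [AffineEquiv.coe_toAffineMap, Equiv.symm_apply_eq, h₁ _ (by linarith [hu y]),
      AffineEquiv.apply_symm_apply]
  · have hc : c ≤ f (α.symm y) := by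
      by_contra! hlt
      have : e₁.symm y = α.symm y := by
        rw [AffineEquiv.symm_apply_eq, ← h₁ _ hlt.le, Equiv.apply_symm_apply]
      linarith [hu y, congrArg f this]
    rw [AffineEquiv.coe_toAffineMap, AffineEquiv.eq_symm_apply, ← h₂ _ hc, Equiv.apply_symm_apply]

end IsHalfPlaneAffine

section VariationFactor

variable {n : ℕ} (x : Fin (n + 1) → ℝ × ℝ)

lemma isCrossing_iff_isSignCrossing (g : ℝ × ℝ →ₗ[ℝ] ℝ) (c : ℝ) (i : Fin n) :
    IsCrossing x g c i ↔ IsSignCrossing (fun j => g (x j) - c) i := by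
  simp only [IsCrossing, IsSignCrossing, sub_neg, sub_pos, sub_eq_zero, ne_eq]

lemma vfOn_eq_ncard_signCrossings (g : ℝ × ℝ →ₗ[ℝ] ℝ) (c : ℝ) :
    vfOn x g c = (signCrossings fun j => g (x j) - c).ncard := by
  simp only [vfOn, signCrossings, isCrossing_iff_isSignCrossing]

lemma vfOn_le_vf {g : ℝ × ℝ →ₗ[ℝ] ℝ} (hg : g ≠ 0) (c : ℝ) : vfOn x g c ≤ vf x := by
  refine le_csSup ⟨n, ?_⟩ ⟨g, c, hg, rfl⟩
  rintro _ ⟨g, c, -, rfl⟩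
  simpa [vfOn] using Set.ncard_le_card {i | IsCrossing x g c i}

lemma ncard_signCrossings_le_vf (u : ℝ × ℝ →ᵃ[ℝ] ℝ) (hu : u.linear ≠ 0) :
    (signCrossings fun j => u (x j)).ncard ≤ vf x := by
  have : (fun j => u (x j)) = fun j => u.linear (x j) - -u 0 := by
    funext j
    rw [u.apply_eq_linear_add, sub_neg_eq_add]
  rw [this, ← vfOn_eq_ncard_signCrossings]
  exact vfOn_le_vf x hu _

lemma one_le_vf (hn : 0 < n) : 1 ≤ vf x := by
  have hfst : LinearMap.fst ℝ ℝ ℝ ≠ 0 := fun h => by simpa using LinearMap.congr_fun h (1, 0)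
  have hcross : IsCrossing x (LinearMap.fst ℝ ℝ ℝ) (x 0).1 ⟨0, hn⟩ :=
    Or.inr (Or.inr (Or.inl ⟨rfl, rfl⟩))
  calc 1 ≤ vfOn x (LinearMap.fst ℝ ℝ ℝ) (x 0).1 := (Set.ncard_pos (Set.toFinite _)).mpr ⟨_, hcross⟩
    _ ≤ vf x := vfOn_le_vf x hfst _

end VariationFactor

lemma IsHalfPlaneAffine.vf_comp_le {α : ℝ × ℝ → ℝ × ℝ} (hα : IsHalfPlaneAffine α) {n : ℕ}
    (x : Fin (n + 1) → ℝ × ℝ) : vf (α ∘ x) ≤ 2 * vf x := by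
  obtain ⟨f, c, hf, e₁, e₂, h₁, h₂⟩ := hα.exists_affineEquiv
  refine csSup_le' ?_
  rintro _ ⟨g, d, hg, rfl⟩
  set ℓ : ℝ × ℝ →ᵃ[ℝ] ℝ := g.toAffineMap - AffineMap.const ℝ _ d
  have hℓ : ℓ.linear ≠ 0 := by simpa [ℓ] using hg
  set u₁ := ℓ.comp e₁.toAffineMap
  set u₂ := ℓ.comp e₂.toAffineMap
  obtain ⟨a, ha⟩ := (u₂ - u₁).exists_eq_mul_sub_of_eq_zero hf fun p hp => by
    simp [u₁, u₂, ← h₁ p hp.le, ← h₂ p hp.ge]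
  have hcross := ncard_signCrossings_le_of_sub_eq_mul (b := fun j => g (α (x j)) - d)
    (p := fun j => u₁ (x j)) (q := fun j => u₂ (x j)) (s := fun j => f (x j) - c)
    (fun j => ha (x j)) (fun j hj => by simp [u₁, ℓ, h₁ _ (sub_nonpos.mp hj)])
    (fun j hj => by simp [u₂, ℓ, h₂ _ (sub_nonneg.mp hj)])
  have hv₁ := ncard_signCrossings_le_vf x u₁ (ℓ.linear_comp_affineEquiv_ne_zero hℓ e₁)
  have hv₂ := ncard_signCrossings_le_vf x u₂ (ℓ.linear_comp_affineEquiv_ne_zero hℓ e₂)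
  rw [vfOn_eq_ncard_signCrossings]
  exact hcross.trans (by omega)

section Variation

variable {σ τ : Set (ℝ × ℝ)} {f : ℝ × ℝ → ℂ}

lemma cvar_nonneg {n : ℕ} (x : Fin (n + 1) → ℝ × ℝ) : 0 ≤ cvar f x :=
  Finset.sum_nonneg fun _ _ => norm_nonneg _

lemma var2_nonneg : 0 ≤ var2 f σ :=
  Real.sSup_nonneg <| by
    rintro _ ⟨n, x, -, rfl⟩
    exact div_nonneg (cvar_nonneg x) (Nat.cast_nonneg _)

lemma cvar_le_mul_vf {M : ℝ} (hM0 : 0 ≤ M) (hM : M ∈ upperBounds (varSet f σ)) {n : ℕ}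
    {x : Fin (n + 1) → ℝ × ℝ} (hx : ∀ i, x i ∈ σ) : cvar f x ≤ M * vf x := by
  rcases n.eq_zero_or_pos with rfl | hn
  · simp only [cvar, Finset.univ_eq_empty, Finset.sum_empty]
    positivity
  · have hvf : (0 : ℝ) < vf x := by exact_mod_cast one_le_vf x hn
    exact (div_le_iff₀ hvf).mp (hM ⟨n, x, hx, rfl⟩)

variable {β : ℝ × ℝ → ℝ × ℝ}

lemma two_mul_mem_upperBounds_varSet_comp (hβ : IsHalfPlaneAffine β) (hβτ : Set.MapsTo β τ σ)
    {M : ℝ} (hM0 : 0 ≤ M) (hM : M ∈ upperBounds (varSet f σ)) :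
    2 * M ∈ upperBounds (varSet (f ∘ β) τ) := by
  rintro _ ⟨n, y, hy, rfl⟩
  have hvf : (vf (β ∘ y) : ℝ) ≤ 2 * vf y := by exact_mod_cast hβ.vf_comp_le y
  refine div_le_of_le_mul₀ (Nat.cast_nonneg _) (by positivity) ?_
  calc cvar (f ∘ β) y = cvar f (β ∘ y) := rfl
    _ ≤ M * vf (β ∘ y) := cvar_le_mul_vf hM0 hM fun i => hβτ (hy i)
    _ ≤ M * (2 * vf y) := by gcongr
    _ = 2 * M * vf y := by ring

lemma MemBV.comp (hf : MemBV f σ) (hβ : IsHalfPlaneAffine β) (hβτ : Set.MapsTo β τ σ) :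
    MemBV (f ∘ β) τ := by
  obtain ⟨⟨N, hN⟩, ⟨M, hM⟩⟩ := hf
  refine ⟨⟨N, ?_⟩, ⟨2 * max M 0, two_mul_mem_upperBounds_varSet_comp hβ hβτ (le_max_right _ _)
    fun r hr => (hM hr).trans (le_max_left _ _)⟩⟩
  rintro _ ⟨z, hz, rfl⟩
  exact hN ⟨β z, hβτ hz, rfl⟩

lemma var2_comp_le (hβ : IsHalfPlaneAffine β) (hβτ : Set.MapsTo β τ σ)
    (hf : BddAbove (varSet f σ)) : var2 (f ∘ β) τ ≤ 2 * var2 f σ :=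
  Real.sSup_le (two_mul_mem_upperBounds_varSet_comp hβ hβτ var2_nonneg fun _ hr => le_csSup hf hr)
    (by linarith [var2_nonneg (f := f) (σ := σ)])

lemma MemBV.bvNorm_comp_le (hf : MemBV f σ) (hβ : IsHalfPlaneAffine β)
    (hβτ : Set.MapsTo β τ σ) : bvNorm (f ∘ β) τ ≤ 2 * bvNorm f σ := by
  have hsup0 : 0 ≤ sSup ((fun z => ‖f z‖) '' σ) := Real.sSup_nonneg <| by
    rintro _ ⟨z, -, rfl⟩
    exact norm_nonneg _
  have hsup : sSup ((fun z => ‖(f ∘ β) z‖) '' τ) ≤ sSup ((fun z => ‖f z‖) '' σ) :=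
    Real.sSup_le (by rintro _ ⟨z, hz, rfl⟩; exact le_csSup hf.1 ⟨β z, hβτ hz, rfl⟩) hsup0
  have hvar := var2_comp_le hβ hβτ hf.2
  unfold bvNorm
  linarith

end Variation

theorem stmt14_general (σ₁ : Set (ℝ × ℝ))
    (α : (ℝ × ℝ) ≃ (ℝ × ℝ)) (hα : IsHalfPlaneAffine ⇑α) :
    (∀ f g : ℝ × ℝ → ℂ,
        (fun q => (f + g) (α.symm q)) = (fun q => f (α.symm q)) + (fun q => g (α.symm q)) ∧
        (fun q => (f * g) (α.symm q)) = (fun q => f (α.symm q)) * (fun q => g (α.symm q))) ∧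
    (∀ f : ℝ × ℝ → ℂ, MemBV f σ₁ ↔ MemBV (fun q => f (α.symm q)) (⇑α '' σ₁)) ∧
    (∀ f : ℝ × ℝ → ℂ, MemBV f σ₁ →
        bvNorm (fun q => f (α.symm q)) (⇑α '' σ₁) ≤ 2 * bvNorm f σ₁) := by
  have hmaps : Set.MapsTo α.symm (α '' σ₁) σ₁ := by
    rintro _ ⟨z, hz, rfl⟩
    simpa using hz
  refine ⟨fun f g => ⟨rfl, rfl⟩, fun f => ⟨fun hf => hf.comp hα.symm hmaps, fun hf => ?_⟩,
    fun f hf => hf.bvNorm_comp_le hα.symm hmaps⟩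
  simpa [Function.comp_def] using hf.comp hα (Set.mapsTo_image α σ₁)

/-- For a half-plane-affine map `α` and nonempty compact `σ₁ ⊆ ℝ²` with `σ₂ = α(σ₁)`, the
map `f ↦ f ∘ α⁻¹` is a bounded algebra isomorphism from `BV(σ₁)` onto `BV(σ₂)`: it respects
the algebra operations, `f ∈ BV(σ₁)` iff `f ∘ α⁻¹ ∈ BV(σ₂)` (so it is a bijection onto
`BV(σ₂)`), and `‖f ∘ α⁻¹‖_{BV(σ₂)} ≤ 2 ‖f‖_{BV(σ₁)}`. -/
theorem stmt14 (σ₁ : Set (ℝ × ℝ)) (hσ : IsCompact σ₁) (hne : σ₁.Nonempty)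
    (α : (ℝ × ℝ) ≃ (ℝ × ℝ)) (hα : IsHalfPlaneAffine ⇑α) :
    (∀ f g : ℝ × ℝ → ℂ,
        (fun q => (f + g) (α.symm q)) = (fun q => f (α.symm q)) + (fun q => g (α.symm q)) ∧
        (fun q => (f * g) (α.symm q)) = (fun q => f (α.symm q)) * (fun q => g (α.symm q))) ∧
    (∀ f : ℝ × ℝ → ℂ, MemBV f σ₁ ↔ MemBV (fun q => f (α.symm q)) (⇑α '' σ₁)) ∧
    (∀ f : ℝ × ℝ → ℂ, MemBV f σ₁ →
        bvNorm (fun q => f (α.symm q)) (⇑α '' σ₁) ≤ 2 * bvNorm f σ₁) :=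
  stmt14_general σ₁ α hα
end
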